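/- arXiv:2101.02360 — 6 statements merged into one kernel-verified Lean document; each statement's English description precedes it below -/
import Mathlib

section
/- Let n be a finite type, let X be a positive semidefinite matrix in Matrix n n ℂ, and let P be an orthogonal projection such that (1 − P) * X * (1 − P) − (1 − P) is positive semidefinite (i.e., P is a pruning projector for X with respect to the identity: X ≥ 1 on the range of 1 − P). Then Re Tr(1 − P) ≤ Re Tr X. -/
open Matrix
open scoped ComplexOrder

/-! Split `X = (1 - P) X (1 - P) + P X P` up to trace (cyclicity and `P² = P`). The pruning
hypothesis bounds the trace of the first compression below by `Tr(1 - P)`, and the second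
compression is positive semidefinite, so its trace is nonnegative. -/

theorem Matrix.trace_eq_trace_mul_mul_add_trace_one_sub_mul_mul
    {n R : Type*} [Fintype n] [DecidableEq n] [CommRing R]
    {P : Matrix n n R} (hP : IsIdempotentElem P) (X : Matrix n n R) :
    X.trace = (P * X * P).trace + ((1 - P) * X * (1 - P)).trace := by
  rw [trace_mul_cycle, hP.eq, trace_mul_cycle, hP.one_sub.eq, ← trace_add, ← add_mul,
    add_sub_cancel, one_mul]

/-- Pointwise form of Lemma 3 of the paper: if `P` is a pruning projector for a
positive semidefinite matrix `X` with respect to the identity (that is, `X ≥ 1` on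
the range of `1 - P`), then `Tr(1 - P) ≤ Tr X`. -/
theorem pruning_trace_le
    {n : Type*} [Fintype n] [DecidableEq n]
    (X : Matrix n n ℂ) (hX : X.PosSemidef)
    (P : Matrix n n ℂ) (hP : Pᴴ = P ∧ P * P = P)
    (hprune : (((1 : Matrix n n ℂ) - P) * X * ((1 : Matrix n n ℂ) - P) -
        ((1 : Matrix n n ℂ) - P)).PosSemidef) :
    (((1 : Matrix n n ℂ) - P).trace).re ≤ (X.trace).re := by
  have hPXP : (P * X * P).PosSemidef := by
    simpa only [hP.1] using hX.mul_mul_conjTranspose_same P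
  refine Complex.re_le_re ?_
  calc ((1 : Matrix n n ℂ) - P).trace
      ≤ ((1 - P) * X * (1 - P)).trace := by
        simpa only [trace_sub, sub_nonneg] using hprune.trace_nonneg
    _ ≤ (P * X * P).trace + ((1 - P) * X * (1 - P)).trace :=
        le_add_of_nonneg_left hPXP.trace_nonneg
    _ = X.trace := (trace_eq_trace_mul_mul_add_trace_one_sub_mul_mul hP.2 X).symm
end

section
/- Let n be a finite type and (Ω, ℙ) a probability space. Let X : Ω → Matrix n n ℂ be entrywise measurable with X ω positive semidefinite for every ω and each entry integrable, and let E[X] denote the matrix with entries E[X] i j = ∫ X ω i j dℙ(ω). Let η ∈ (0,1) be such that (1−η) • 1 − E[X] is positive semidefinite (E[X] ≤ (1−η)·1 in the Loewner order). Let P : Ω → Matrix n n ℂ be such that for every ω, P ω is an orthogonal projection and (1 − P ω) * X ω * (1 − P ω) − (1 − P ω) is positive semidefinite (P ω is a pruning projector for X ω), and assume ω ↦ Re Tr(1 − P ω) and ω ↦ ‖X ω − E[X]‖₁ are integrable. Then ∫ Re Tr(1 − P ω) dℙ(ω) ≤ (1/η) · ∫ ‖X ω − E[X]‖₁ dℙ(ω).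 -/
open Matrix MeasureTheory
open scoped ComplexOrder

/-- Positive semidefinite square root, extended to a total function
(it agrees with `Matrix.PosSemidef.sqrt` on positive semidefinite matrices). -/
noncomputable def psqrt {n : Type*} [Fintype n] [DecidableEq n] (A : Matrix n n ℂ) :
    Matrix n n ℂ :=
  open scoped Classical in
  if h : A.PosSemidef then
    (h.1.eigenvectorUnitary : Matrix n n ℂ) * diagonal ((↑) ∘ (√·) ∘ h.1.eigenvalues) *
      (star h.1.eigenvectorUnitary : Matrix n n ℂ)
  else 0

/-- The trace norm ‖A‖₁ = Re Tr √(AᴴA). -/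
noncomputable def traceNorm {n : Type*} [Fintype n] [DecidableEq n] (A : Matrix n n ℂ) : ℝ :=
  (psqrt (Aᴴ * A)).trace.re

/-! Put `Q = 1 - P`, the projection on which `X ≥ 1`. Compressing by `Q` gives `Tr Q ≤ Tr (Q X Q)`
and `Tr (Q E[X] Q) ≤ (1 - η) Tr Q`, hence `η Tr Q ≤ Tr (Q (X - E[X]) Q)`. For Hermitian `M` we
have `M ≤ |M|`, and compressing the positive matrix `|M|` by a projection cannot increase its
trace, so `Tr (Q M Q) ≤ Tr |M| = ‖M‖₁`. Integrating the pointwise bound over `ω` finishes. -/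

open scoped MatrixOrder

namespace Matrix

variable {n : Type*} [Fintype n]

lemma re_trace_mono {A B : Matrix n n ℂ} (h : A ≤ B) : A.trace.re ≤ B.trace.re :=
  (Complex.le_def.mp (OrderHomClass.mono (tracePositiveLinearMap n ℂ ℂ) h)).1

lemma trace_conj_add_trace_conj_one_sub {R : Type*} [CommRing R] [DecidableEq n]
    {Q : Matrix n n R} (hQ : IsIdempotentElem Q) (A : Matrix n n R) :
    (Q * A * Q).trace + ((1 - Q) * A * (1 - Q)).trace = A.trace := by
  rw [trace_mul_cycle, hQ.eq, trace_mul_cycle (1 - Q), hQ.one_sub.eq, ← trace_add, ← add_mul,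
    add_sub_cancel, one_mul]

lemma re_trace_conj_le [DecidableEq n] {A Q : Matrix n n ℂ} (hA : 0 ≤ A)
    (hQ : IsStarProjection Q) : (Q * A * Q).trace.re ≤ A.trace.re := by
  have hcompl := re_trace_mono (hQ.one_sub.isSelfAdjoint.conjugate_nonneg hA)
  rw [← trace_conj_add_trace_conj_one_sub hQ.isIdempotentElem A, Complex.add_re]
  simpa using hcompl

end Matrix

open Matrix

lemma psqrt_eq_cfc_sqrt {n : Type*} [Fintype n] [DecidableEq n] {A : Matrix n n ℂ}
    (h : A.PosSemidef) : psqrt A = CFC.sqrt A := by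
  rw [psqrt, dif_pos h, CFC.sqrt_eq_cfc, cfc_nnreal_eq_real _ A, h.1.cfc_eq, IsHermitian.cfc,
    Unitary.conjStarAlgAut_apply]
  congr 3
  funext i
  simp [Real.coe_toNNReal', max_eq_left (h.eigenvalues_nonneg i)]

section traceNorm

variable {n : Type*} [Fintype n] [DecidableEq n]

lemma traceNorm_eq_re_trace_abs (A : Matrix n n ℂ) : traceNorm A = (CFC.abs A).trace.re := by
  rw [traceNorm, psqrt_eq_cfc_sqrt (posSemidef_conjTranspose_mul_self A)]
  rfl

lemma re_trace_conj_le_traceNorm {M Q : Matrix n n ℂ} (hM : IsSelfAdjoint M)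
    (hQ : IsStarProjection Q) : (Q * M * Q).trace.re ≤ traceNorm M := by
  have hle : M ≤ CFC.abs M := by
    rw [← sub_nonneg, CFC.abs_sub_self M hM]
    exact smul_nonneg zero_le_two (CFC.negPart_nonneg M)
  calc (Q * M * Q).trace.re ≤ (Q * CFC.abs M * Q).trace.re :=
        re_trace_mono (hQ.isSelfAdjoint.conjugate_le_conjugate hle)
    _ ≤ (CFC.abs M).trace.re := re_trace_conj_le (CFC.abs_nonneg M) hQ
    _ = traceNorm M := (traceNorm_eq_re_trace_abs M).symm

lemma mul_re_trace_le_traceNorm_sub {X Y Q : Matrix n n ℂ} {c : ℝ} (hX : IsSelfAdjoint X)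
    (hY : Y ≤ (1 - c) • 1) (hQ : IsStarProjection Q) (hQX : Q ≤ Q * X * Q) :
    c * Q.trace.re ≤ traceNorm (X - Y) := by
  have hYsa : IsSelfAdjoint Y := by
    have := ((IsSelfAdjoint.all (1 - c)).smul (IsSelfAdjoint.one _)).sub
      (IsSelfAdjoint.of_nonneg (sub_nonneg.mpr hY))
    rwa [sub_sub_cancel] at this
  calc c * Q.trace.re = Q.trace.re - (Q * ((1 - c) • 1) * Q).trace.re := by
        rw [mul_smul_comm, mul_one, smul_mul_assoc, hQ.isIdempotentElem.eq, trace_smul]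
        simp only [Complex.real_smul, Complex.mul_re, Complex.ofReal_re, Complex.ofReal_im]
        ring
    _ ≤ (Q * X * Q).trace.re - (Q * Y * Q).trace.re :=
        sub_le_sub (re_trace_mono hQX) (re_trace_mono (hQ.isSelfAdjoint.conjugate_le_conjugate hY))
    _ = (Q * (X - Y) * Q).trace.re := by rw [mul_sub, sub_mul, trace_sub, Complex.sub_re]
    _ ≤ traceNorm (X - Y) := re_trace_conj_le_traceNorm (hX.sub hYsa) hQ

end traceNorm

theorem pruning_trace_inequality_general
    {n : Type*} [Fintype n] [DecidableEq n]
    {Ω : Type*} [MeasurableSpace Ω] (Pr : Measure Ω)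
    (X : Ω → Matrix n n ℂ)
    (hXpsd : ∀ ω, (X ω).PosSemidef)
    (η : ℝ) (hη : η ∈ Set.Ioo (0 : ℝ) 1)
    (hEX : ((1 - η) • (1 : Matrix n n ℂ) -
        Matrix.of fun i j => ∫ ω, X ω i j ∂Pr).PosSemidef)
    (P : Ω → Matrix n n ℂ)
    (hP : ∀ ω, (P ω)ᴴ = P ω ∧ P ω * P ω = P ω)
    (hprune : ∀ ω, (((1 : Matrix n n ℂ) - P ω) * X ω * ((1 : Matrix n n ℂ) - P ω) -
        ((1 : Matrix n n ℂ) - P ω)).PosSemidef)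
    (hint1 : Integrable (fun ω => (((1 : Matrix n n ℂ) - P ω).trace).re) Pr)
    (hint2 : Integrable
      (fun ω => traceNorm (X ω - Matrix.of fun i j => ∫ ω', X ω' i j ∂Pr)) Pr) :
    ∫ ω, (((1 : Matrix n n ℂ) - P ω).trace).re ∂Pr ≤
      (1 / η) * ∫ ω, traceNorm (X ω - Matrix.of fun i j => ∫ ω', X ω' i j ∂Pr) ∂Pr := by
  have hpointwise (ω : Ω) : η * ((1 : Matrix n n ℂ) - P ω).trace.re ≤
      traceNorm (X ω - Matrix.of fun i j => ∫ ω', X ω' i j ∂Pr) :=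
    mul_re_trace_le_traceNorm_sub (hXpsd ω).isHermitian (le_iff.mpr hEX)
      (isStarProjection_iff'.mpr ⟨(hP ω).2, (hP ω).1⟩).one_sub (le_iff.mpr (hprune ω))
  rw [one_div_mul_eq_div, le_div_iff₀ hη.1, mul_comm, ← integral_const_mul]
  exact integral_mono (hint1.const_mul η) hint2 hpointwise

/-- The Pruning Trace Inequality (Lemma 4 of the paper): if `E[X] ≤ (1-η)·1` and, for
each `ω`, `P ω` is a pruning projector for the positive semidefinite matrix `X ω`, then
`E[Tr(1 - P)] ≤ (1/η) E[‖X - E[X]‖₁]`. -/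
theorem pruning_trace_inequality
    {n : Type*} [Fintype n] [DecidableEq n]
    {Ω : Type*} [MeasurableSpace Ω] (Pr : Measure Ω) [IsProbabilityMeasure Pr]
    (X : Ω → Matrix n n ℂ)
    (hXmeas : ∀ i j, Measurable fun ω => X ω i j)
    (hXint : ∀ i j, Integrable (fun ω => X ω i j) Pr)
    (hXpsd : ∀ ω, (X ω).PosSemidef)
    (η : ℝ) (hη : η ∈ Set.Ioo (0 : ℝ) 1)
    (hEX : ((1 - η) • (1 : Matrix n n ℂ) -
        Matrix.of fun i j => ∫ ω, X ω i j ∂Pr).PosSemidef)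
    (P : Ω → Matrix n n ℂ)
    (hP : ∀ ω, (P ω)ᴴ = P ω ∧ P ω * P ω = P ω)
    (hprune : ∀ ω, (((1 : Matrix n n ℂ) - P ω) * X ω * ((1 : Matrix n n ℂ) - P ω) -
        ((1 : Matrix n n ℂ) - P ω)).PosSemidef)
    (hint1 : Integrable (fun ω => (((1 : Matrix n n ℂ) - P ω).trace).re) Pr)
    (hint2 : Integrable
      (fun ω => traceNorm (X ω - Matrix.of fun i j => ∫ ω', X ω' i j ∂Pr)) Pr) :
    ∫ ω, (((1 : Matrix n n ℂ) - P ω).trace).re ∂Pr ≤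
      (1 / η) * ∫ ω, traceNorm (X ω - Matrix.of fun i j => ∫ ω', X ω' i j ∂Pr) ∂Pr :=
  pruning_trace_inequality_general Pr X hXpsd η hη hEX P hP hprune hint1 hint2
end

section
/- Let n be a finite type, let X be a positive semidefinite matrix in Matrix n n ℂ, let P be an orthogonal projection such that (1 − P) * X * (1 − P) − (1 − P) is positive semidefinite (P is a pruning projector for X), let η ∈ (0,1), and let Y be a Hermitian matrix such that (1−η) • 1 − Y is positive semidefinite (Y ≤ (1−η)·1 in the Loewner order). Then Re Tr(1 − P) ≤ (1/η) · ‖X − Y‖₁. -/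
open Matrix
open scoped ComplexOrder

/-!
Write `Q = 1 - P`. Conjugating `Y ≤ (1 - η)·1` by `Q` and adding `Q ≤ QXQ` gives
`η·Q ≤ Q(X - Y)Q`, hence `η Tr Q ≤ Re Tr((X - Y)Q)`. For Hermitian `A` and a projection `Q`,
`Tr(AQ) ≤ Tr(|A|Q) ≤ Tr|A| = ‖A‖₁`, because `|A| - A` and `|A|` are positive semidefinite and
a positive semidefinite matrix has nonnegative trace against the projections `Q` and `1 - Q`.
-/

open scoped MatrixOrder

theorem psqrt_eq_sqrt {n : Type*} [Fintype n] [DecidableEq n] {A : Matrix n n ℂ}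
    (hA : A.PosSemidef) : psqrt A = CFC.sqrt A := by
  rw [CFC.sqrt_eq_real_sqrt A hA.nonneg, cfcₙ_eq_cfc, hA.1.cfc_eq, psqrt, dif_pos hA]
  rfl

theorem traceNorm_eq_trace_abs {n : Type*} [Fintype n] [DecidableEq n] (A : Matrix n n ℂ) :
    traceNorm A = (CFC.abs A).trace.re := by
  rw [traceNorm, psqrt_eq_sqrt (posSemidef_conjTranspose_mul_self A), CFC.abs,
    star_eq_conjTranspose]

namespace IsStarProjection

variable {𝕜 n : Type*} [RCLike 𝕜] [Fintype n] {Q : Matrix n n 𝕜}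

theorem trace_mul_nonneg (hQ : IsStarProjection Q) {M : Matrix n n 𝕜} (hM : M.PosSemidef) :
    0 ≤ (M * Q).trace := by
  have h := (hM.conjTranspose_mul_mul_same Q).trace_nonneg
  rwa [← star_eq_conjTranspose, hQ.isSelfAdjoint, trace_mul_cycle, hQ.isIdempotentElem.eq,
    trace_mul_comm] at h

theorem mul_trace_re_le_of_smul_le (hQ : IsStarProjection Q) {A : Matrix n n 𝕜} {η : ℝ}
    (h : η • Q ≤ Q * A * Q) : η * RCLike.re Q.trace ≤ RCLike.re (A * Q).trace := by
  have htr := h.trace_nonneg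
  rw [trace_sub, trace_mul_cycle, hQ.isIdempotentElem.eq, trace_mul_comm, sub_nonneg] at htr
  simpa [RCLike.smul_re] using RCLike.re_le_re htr

variable [DecidableEq n]

theorem smul_le_mul_sub_mul (hQ : IsStarProjection Q) {X Y : Matrix n n 𝕜} {η : ℝ}
    (hX : Q ≤ Q * X * Q) (hY : Y ≤ (1 - η) • 1) : η • Q ≤ Q * (X - Y) * Q := by
  have hQY : Q * Y * Q ≤ (1 - η) • Q := by
    simpa [hQ.isSelfAdjoint.star_eq, hQ.isIdempotentElem.eq]
      using star_left_conjugate_le_conjugate hY Q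
  calc η • Q = Q - (1 - η) • Q := by module
    _ ≤ Q * X * Q - Q * Y * Q := sub_le_sub hX hQY
    _ = Q * (X - Y) * Q := by noncomm_ring

theorem trace_mul_le_trace_abs (hQ : IsStarProjection Q) {A : Matrix n n 𝕜}
    (hA : A.IsHermitian) : (A * Q).trace ≤ (CFC.abs A).trace := by
  have hAQ : 0 ≤ ((CFC.abs A - A) * Q).trace :=
    hQ.trace_mul_nonneg <| nonneg_iff_posSemidef.mp <|
      CFC.abs_sub_self A hA ▸ smul_nonneg zero_le_two (CFC.negPart_nonneg A)
  have hQc : 0 ≤ (CFC.abs A * (1 - Q)).trace :=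
    hQ.one_sub.trace_mul_nonneg (nonneg_iff_posSemidef.mp (CFC.abs_nonneg A))
  rw [sub_mul, trace_sub, sub_nonneg] at hAQ
  rw [mul_sub, mul_one, trace_sub, sub_nonneg] at hQc
  exact hAQ.trans hQc

theorem trace_mul_re_le_traceNorm {Q A : Matrix n n ℂ} (hQ : IsStarProjection Q)
    (hA : A.IsHermitian) : (A * Q).trace.re ≤ traceNorm A :=
  traceNorm_eq_trace_abs A ▸ Complex.re_le_re (hQ.trace_mul_le_trace_abs hA)

end IsStarProjection

/-- Deterministic core of the Pruning Trace Inequality (Lemma 4 of the paper): if `P` is a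
pruning projector for the positive semidefinite matrix `X`, `η ∈ (0,1)` and `Y` is a
Hermitian matrix with `Y ≤ (1-η)·1` in the Loewner order, then
`Re Tr(1 - P) ≤ (1/η) ‖X - Y‖₁`. -/
theorem pruning_trace_inequality_det
    {n : Type*} [Fintype n] [DecidableEq n]
    (X : Matrix n n ℂ) (hX : X.PosSemidef)
    (P : Matrix n n ℂ) (hP : Pᴴ = P ∧ P * P = P)
    (hprune : (((1 : Matrix n n ℂ) - P) * X * ((1 : Matrix n n ℂ) - P) -
        ((1 : Matrix n n ℂ) - P)).PosSemidef)
    (η : ℝ) (hη : η ∈ Set.Ioo (0 : ℝ) 1)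
    (Y : Matrix n n ℂ) (hY : Y.IsHermitian)
    (hYle : ((1 - η) • (1 : Matrix n n ℂ) - Y).PosSemidef) :
    (((1 : Matrix n n ℂ) - P).trace).re ≤ (1 / η) * traceNorm (X - Y) := by
  have hQ : IsStarProjection (1 - P) := (isStarProjection_iff'.mpr ⟨hP.2, hP.1⟩).one_sub
  have htrace : η * (1 - P).trace.re ≤ traceNorm (X - Y) :=
    (hQ.mul_trace_re_le_of_smul_le (hQ.smul_le_mul_sub_mul hprune hYle)).trans
      (hQ.trace_mul_re_le_traceNorm (hX.isHermitian.sub hY))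
  rw [one_div_mul_eq_div, le_div_iff₀ hη.1, mul_comm]
  exact htrace
end

section
/- Let X and n be finite types, let λ, μ : X → ℝ with λ x ≥ 0 and μ x > 0 for all x, let κ > 0 and d > 0 be reals with λ x ≤ κ · μ x for all x, and let σ : X → Matrix n n ℂ with σ x positive semidefinite for all x. Let Π and Π_x (for x : X) be orthogonal projections such that Π_x * σ x * Π_x ≤ (1/d) • Π_x and Π_x * σ x * Π_x ≤ σ x in the Loewner order for all x. Set σ̄ := ∑_x (λ x) • σ x and σ̃ x := Π * Π_x * σ x * Π_x * Π. Then (κ/d) • (Π * σ̄ * Π) − ∑_x ((λ x)²/(μ x)) • (σ̃ x * σ̃ x) is positive semidefinite. -/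
/-!
With `a := Πₓ σₓ Πₓ` we have `0 ≤ a ≤ 1/d`, so conjugating by `√a` gives `a² ≤ a/d`, while
`Π ≤ 1` gives `(Π a Π)² ≤ Π a² Π`. Hence `σ̃ₓ² ≤ (1/d) Π a Π ≤ (1/d) Π σₓ Π`, and
`λₓ²/μₓ ≤ κ λₓ` sums these bounds to `(κ/d) Π σ̄ Π`.
-/

open Matrix
open scoped ComplexOrder

section StarOrderedRing

variable {R : Type*} [Ring R] [StarRing R] [PartialOrder R] [StarOrderedRing R]

theorem IsStarProjection.conjugate_mul_self_le {p a : R} (hp : IsStarProjection p)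
    (ha : IsSelfAdjoint a) : (p * a * p) * (p * a * p) ≤ p * (a * a) * p := by
  have hpp : p * p = p := hp.isIdempotentElem.eq
  -- `p a² p - (p a p)² = (p a) (1 - p) (p a)⋆`
  have h := star_right_conjugate_nonneg hp.one_sub_nonneg (p * a)
  rw [star_mul, ha.star_eq, hp.isSelfAdjoint.star_eq] at h
  refine sub_nonneg.mp (h.trans_eq ?_)
  calc p * a * (1 - p) * (a * p) = p * (a * a) * p - p * a * (p * p) * a * p := by
        rw [hpp]; noncomm_ring
    _ = _ := by simp only [mul_assoc]

end StarOrderedRing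

section ContinuousFunctionalCalculus

variable {A : Type*} [PartialOrder A] [Ring A] [StarRing A] [TopologicalSpace A]
  [IsSemitopologicalRing A] [T2Space A] [StarOrderedRing A] [Algebra ℝ A]
  [ContinuousFunctionalCalculus ℝ A IsSelfAdjoint] [NonnegSpectrumClass ℝ A]

theorem mul_self_le_smul_self_of_le_algebraMap {a : A} {t : ℝ} (ha : 0 ≤ a)
    (hat : a ≤ algebraMap ℝ A t) : a * a ≤ t • a := by
  set s := CFC.sqrt a
  have hs : s * s = a := CFC.sqrt_mul_sqrt_self a
  calc a * a = s * a * s := by rw [← hs]; simp only [mul_assoc]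
    _ ≤ s * algebraMap ℝ A t * s := conjugate_le_conjugate_of_nonneg hat (CFC.sqrt_nonneg a)
    _ = t • a := by rw [Algebra.algebraMap_eq_smul_one, mul_smul_one, smul_mul_assoc, hs]

theorem IsStarProjection.conjugate_conjugate_mul_self_le [PosSMulMono ℝ A] {p q σ : A} {t : ℝ}
    (hp : IsStarProjection p) (hq : IsStarProjection q) (hσ : 0 ≤ σ) (ht : 0 ≤ t)
    (hσ_le : q * σ * q ≤ σ) (hσ_le_smul : q * σ * q ≤ t • q) :
    (p * q * σ * q * p) * (p * q * σ * q * p) ≤ t • (p * σ * p) := by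
  set a := q * σ * q
  have ha : 0 ≤ a := conjugate_nonneg_of_nonneg hσ hq.nonneg
  have ha_le : a ≤ algebraMap ℝ A t := by
    rw [Algebra.algebraMap_eq_smul_one]
    exact hσ_le_smul.trans (smul_le_smul_of_nonneg_left hq.le_one ht)
  calc (p * q * σ * q * p) * (p * q * σ * q * p) = (p * a * p) * (p * a * p) := by
        simp only [a, mul_assoc]
    _ ≤ p * (a * a) * p := hp.conjugate_mul_self_le ha.isSelfAdjoint
    _ ≤ p * (t • a) * p :=
        hp.isSelfAdjoint.conjugate_le_conjugate (mul_self_le_smul_self_of_le_algebraMap ha ha_le)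
    _ = t • (p * a * p) := by rw [mul_smul_comm, smul_mul_assoc]
    _ ≤ t • (p * σ * p) :=
        smul_le_smul_of_nonneg_left (hp.isSelfAdjoint.conjugate_le_conjugate hσ_le) ht

end ContinuousFunctionalCalculus

theorem sq_div_le_mul_of_le_mul {l m κ : ℝ} (hl : 0 ≤ l) (hm : 0 < m) (hlκ : l ≤ κ * m) :
    l ^ 2 / m ≤ κ * l := by
  rw [div_le_iff₀ hm]
  nlinarith

open scoped MatrixOrder

theorem second_moment_operator_bound_general
    {X : Type*} [Fintype X]
    {n : Type*} [Fintype n]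
    (lam μ : X → ℝ) (hlam0 : ∀ x, 0 ≤ lam x) (hμ0 : ∀ x, 0 < μ x)
    (κ d : ℝ) (hd : 0 < d)
    (hκμ : ∀ x, lam x ≤ κ * μ x)
    (σ : X → Matrix n n ℂ) (hσ : ∀ x, (σ x).PosSemidef)
    (P : Matrix n n ℂ) (hP : Pᴴ = P ∧ P * P = P)
    (Px : X → Matrix n n ℂ) (hPx : ∀ x, (Px x)ᴴ = Px x ∧ Px x * Px x = Px x)
    (h3 : ∀ x, ((1 / d) • Px x - Px x * σ x * Px x).PosSemidef)
    (h4 : ∀ x, (σ x - Px x * σ x * Px x).PosSemidef) :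
    ((κ / d) • (P * (∑ x, lam x • σ x) * P) -
      ∑ x, ((lam x) ^ 2 / μ x) • ((P * Px x * σ x * Px x * P) *
        (P * Px x * σ x * Px x * P))).PosSemidef := by
  classical
  have hPproj : IsStarProjection P := ⟨hP.2, hP.1⟩
  rw [← nonneg_iff_posSemidef, sub_nonneg, Finset.mul_sum, Finset.sum_mul, Finset.smul_sum]
  refine Finset.sum_le_sum fun x _ => ?_
  have hcut := hPproj.conjugate_conjugate_mul_self_le ⟨(hPx x).2, (hPx x).1⟩ (hσ x).nonneg
    (one_div_nonneg.mpr hd.le) (h4 x) (h3 x)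
  have hPσP : 0 ≤ (1 / d) • (P * σ x * P) :=
    smul_nonneg (one_div_nonneg.mpr hd.le)
      (conjugate_nonneg_of_nonneg (hσ x).nonneg hPproj.nonneg)
  calc (lam x ^ 2 / μ x) • ((P * Px x * σ x * Px x * P) * (P * Px x * σ x * Px x * P))
      ≤ (lam x ^ 2 / μ x) • (1 / d) • (P * σ x * P) :=
        smul_le_smul_of_nonneg_left hcut (div_nonneg (sq_nonneg _) (hμ0 x).le)
    _ ≤ (κ * lam x) • (1 / d) • (P * σ x * P) :=
        smul_le_smul_of_nonneg_right (sq_div_le_mul_of_le_mul (hlam0 x) (hμ0 x) (hκμ x)) hPσP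
    _ = (κ / d) • (P * (lam x • σ x) * P) := by
        rw [mul_smul_comm, smul_mul_assoc, smul_smul, smul_smul]
        congr 1
        ring

/-- The operator inequality (eq. (26), 'bound_expec_sigma') in the paper's proof of its
Covering Lemma: the second moment `∑ₓ (λₓ²/μₓ) σ̃ₓ²` of the change-of-measure weighted
cut-down operators `σ̃ₓ = Π Πₓ σₓ Πₓ Π` is dominated by `(κ/d) Π σ̄ Π` in the Loewner
order. -/
theorem second_moment_operator_bound
    {X : Type*} [Fintype X]
    {n : Type*} [Fintype n] [DecidableEq n]
    (lam μ : X → ℝ) (hlam0 : ∀ x, 0 ≤ lam x) (hμ0 : ∀ x, 0 < μ x)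
    (κ d : ℝ) (hκ : 0 < κ) (hd : 0 < d)
    (hκμ : ∀ x, lam x ≤ κ * μ x)
    (σ : X → Matrix n n ℂ) (hσ : ∀ x, (σ x).PosSemidef)
    (P : Matrix n n ℂ) (hP : Pᴴ = P ∧ P * P = P)
    (Px : X → Matrix n n ℂ) (hPx : ∀ x, (Px x)ᴴ = Px x ∧ Px x * Px x = Px x)
    (h3 : ∀ x, ((1 / d) • Px x - Px x * σ x * Px x).PosSemidef)
    (h4 : ∀ x, (σ x - Px x * σ x * Px x).PosSemidef) :
    ((κ / d) • (P * (∑ x, lam x • σ x) * P) -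
      ∑ x, ((lam x) ^ 2 / μ x) • ((P * Px x * σ x * Px x * P) *
        (P * Px x * σ x * Px x * P))).PosSemidef :=
  second_moment_operator_bound_general lam μ hlam0 hμ0 κ d hd hκμ σ hσ P hP Px hPx h3 h4
end

section
/- Let p be a prime and k, n, l natural numbers. Consider the uniform probability mass function on pairs (G, h), where G ranges over Matrix (Fin k) (Fin n) (ZMod p) and h ranges over all functions (Fin l → ZMod p) → (Fin n → ZMod p). For a : Fin k → ZMod p and m : Fin l → ZMod p, define the random codeword W(a, m)(G, h) := Matrix.vecMul a G + h m : Fin n → ZMod p. Then: (i) for every (a, m) and every w : Fin n → ZMod p, the probability that W(a, m) = w equals (1/p)^n; and (ii) for every (a, m) ≠ (a', m') and every w, w' : Fin n → ZMod p, the probability that W(a, m) = w and W(a', m') = w' equals (1/p)^(2n). In particular, the codewords of a random unionized coset code are uniformly distributed and pairwise independent. -/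
open Function

lemma fiber_card_mul {G H : Type*} [AddCommGroup G] [AddCommGroup H]
    (f : G →+ H) (hf : Function.Surjective f) (y : H) :
    Nat.card {x // f x = y} * Nat.card H = Nat.card G := by
  obtain ⟨x0, hx0⟩ := hf y
  have e : {x // f x = y} ≃ f.ker :=
    { toFun := fun x => ⟨x.1 - x0, by simp [AddMonoidHom.mem_ker, map_sub, x.2, hx0]⟩
      invFun := fun x => ⟨x.1 + x0, by
        have hx := x.2
        rw [AddMonoidHom.mem_ker] at hx
        simp [map_add, hx, hx0]⟩
      left_inv := fun x => by simp
      right_inv := fun x => by simp }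
  have e2 : (G ⧸ f.ker) ≃ H :=
    (QuotientAddGroup.quotientKerEquivOfSurjective f hf).toEquiv
  rw [Nat.card_congr e, ← Nat.card_congr e2, mul_comm]
  exact (AddSubgroup.card_eq_card_quotient_mul_card_addSubgroup f.ker).symm

lemma measure_fiber {G H : Type*} [AddCommGroup G] [Fintype G] [Nonempty G]
    [AddCommGroup H] [Fintype H]
    (f : G →+ H) (hf : Function.Surjective f) (y : H) :
    (PMF.uniformOfFintype G).toOuterMeasure {x | f x = y}
      = 1 / (Fintype.card H : ENNReal) := by
  classical
  rw [PMF.toOuterMeasure_uniformOfFintype_apply]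
  have key := fiber_card_mul f hf y
  have hN : Fintype.card ↥{x | f x = y} = Nat.card {x // f x = y} := by
    rw [Nat.card_eq_fintype_card]; rfl
  have hG : Fintype.card G = Nat.card {x // f x = y} * Nat.card H := by
    rw [key, Nat.card_eq_fintype_card]
  rw [hN, hG, Nat.card_eq_fintype_card (α := H)]
  have hNne : (Nat.card {x // f x = y} : ENNReal) ≠ 0 := by
    have : Nonempty {x // f x = y} := ⟨⟨(hf y).choose, (hf y).choose_spec⟩⟩
    simp [Nat.card_pos.ne']
  push_cast
  nth_rewrite 1 [← mul_one ((Nat.card {x // f x = y} : ℕ) : ENNReal)]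
  rw [ENNReal.mul_div_mul_left _ _ hNne (by simp)]

/-- The codeword map `(G, h) ↦ aG + h(m)` as an additive monoid hom. -/
def codeHom (p k n l : ℕ) [Fact p.Prime] (a : Fin k → ZMod p) (m : Fin l → ZMod p) :
    (Matrix (Fin k) (Fin n) (ZMod p) × ((Fin l → ZMod p) → (Fin n → ZMod p))) →+
      (Fin n → ZMod p) where
  toFun gh := Matrix.vecMul a gh.1 + gh.2 m
  map_zero' := by simp
  map_add' x y := by
    simp only [Prod.fst_add, Prod.snd_add, Matrix.vecMul_add, Pi.add_apply]
    abel

/-- Codewords of a random unionized coset code, with generator matrix `G` and coset-shift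
map `h` drawn uniformly and independently, are uniformly distributed and pairwise
independent: for every message pair `(a, m)` the codeword `W(a,m) = aG + h(m)` is uniform
on `(ZMod p)ⁿ`, and for distinct message pairs the joint distribution of the two
codewords is uniform on pairs. -/
theorem ucc_codewords_uniform_and_pairwise_independent
    (p : ℕ) [Fact p.Prime] (k n l : ℕ) :
    (∀ (a : Fin k → ZMod p) (m : Fin l → ZMod p) (w : Fin n → ZMod p),
      (PMF.uniformOfFintype
          (Matrix (Fin k) (Fin n) (ZMod p) ×
            ((Fin l → ZMod p) → (Fin n → ZMod p)))).toOuterMeasure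
        {gh | Matrix.vecMul a gh.1 + gh.2 m = w} = ((1 : ENNReal) / p) ^ n) ∧
    (∀ (a a' : Fin k → ZMod p) (m m' : Fin l → ZMod p), (a, m) ≠ (a', m') →
      ∀ (w w' : Fin n → ZMod p),
      (PMF.uniformOfFintype
          (Matrix (Fin k) (Fin n) (ZMod p) ×
            ((Fin l → ZMod p) → (Fin n → ZMod p)))).toOuterMeasure
        {gh | Matrix.vecMul a gh.1 + gh.2 m = w ∧ Matrix.vecMul a' gh.1 + gh.2 m' = w'} =
        ((1 : ENNReal) / p) ^ (2 * n)) := by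
  have hp : (p : ENNReal) ≠ 0 := by
    exact_mod_cast Nat.cast_ne_zero.mpr (Fact.out : p.Prime).pos.ne'
  have hcard1 : (Fintype.card (Fin n → ZMod p) : ENNReal) = (p : ENNReal) ^ n := by
    simp [ZMod.card]
  have hinv : ∀ N : ℕ, ((1 : ENNReal) / p) ^ N = 1 / (p : ENNReal) ^ N := by
    intro N; rw [one_div, one_div, ENNReal.inv_pow]
  constructor
  · intro a m w
    have hsurj : Function.Surjective (codeHom p k n l a m) := by
      intro w
      exact ⟨(0, fun _ => w), by simp [codeHom]⟩
    have := measure_fiber (codeHom p k n l a m) hsurj w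
    rw [hinv n, ← hcard1]
    exact this
  · intro a a' m m' hne w w'
    set f := ((codeHom p k n l a m).prod (codeHom p k n l a' m')) with hf
    have hsurj : Function.Surjective f := by
      rintro ⟨w, w'⟩
      by_cases hm : m = m'
      · -- then a ≠ a'
        have ha : a ≠ a' := by
          intro h; exact hne (by rw [h, hm])
        obtain ⟨i, hi⟩ := Function.ne_iff.mp ha
        set d : ZMod p := (a i - a' i)⁻¹ with hd
        set c : Fin n → ZMod p := w - w' with hc
        set G : Matrix (Fin k) (Fin n) (ZMod p) :=
          fun i' j => if i' = i then d * c j else 0 with hG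
        have hvm : ∀ v : Fin k → ZMod p, Matrix.vecMul v G = fun j => v i * (d * c j) := by
          intro v
          funext j
          simp only [Matrix.vecMul, dotProduct, hG, mul_ite, mul_zero]
          rw [Finset.sum_ite_eq' Finset.univ i (fun i' => v i' * (d * c j))]
          simp
        have hsub : a i - a' i ≠ 0 := sub_ne_zero_of_ne hi
        have hdc : (a i - a' i) * d = 1 := mul_inv_cancel₀ hsub
        refine ⟨(G, fun _ => w - Matrix.vecMul a G), ?_⟩
        have h2 : Matrix.vecMul a' G + (w - Matrix.vecMul a G) = w' := by
          funext j
          have : a i * (d * c j) - a' i * (d * c j) = c j := by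
            rw [← sub_mul, ← mul_assoc, hdc, one_mul]
          simp only [Pi.add_apply, Pi.sub_apply, hvm]
          have hcj : c j = w j - w' j := rfl
          linear_combination -this - hcj
        simp only [hf, AddMonoidHom.prod_apply, codeHom, AddMonoidHom.coe_mk,
          ZeroHom.coe_mk, Prod.mk.injEq]
        exact ⟨by abel, h2⟩
      · refine ⟨(0, Function.update (Function.update (fun _ => 0) m w) m' w'), ?_⟩
        simp only [hf, AddMonoidHom.prod_apply, codeHom, AddMonoidHom.coe_mk,
          ZeroHom.coe_mk, Matrix.vecMul_zero, zero_add, Prod.mk.injEq]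
        constructor
        · rw [Function.update_of_ne hm, Function.update_self]
        · rw [Function.update_self]
    have hset : {gh : Matrix (Fin k) (Fin n) (ZMod p) ×
          ((Fin l → ZMod p) → (Fin n → ZMod p)) |
        Matrix.vecMul a gh.1 + gh.2 m = w ∧ Matrix.vecMul a' gh.1 + gh.2 m' = w'}
        = {x | f x = (w, w')} := by
      ext x
      simp [hf, codeHom, Prod.ext_iff]
    rw [hset, measure_fiber f hsurj (w, w'), hinv (2 * n)]
    congr 1
    simp [ZMod.card, pow_mul, ← pow_add, two_mul]
end

section
/- Let iURB, iVRA, iURZ, iVRZ, iUVRZ, iWU, iWV, iUV, sU, sV, sUV, sW, L be real numbers satisfying iUV = sU + sV − sUV, iWU = sW + sU − sUV, iWV = sW + sV − sUV, and sW ≤ L. Define R̄₃ ⊆ ℝ⁴ as the set of quadruples (R₁, R₂, C₁, C₂) with R₁ ≥ 0, R₂ ≥ 0, C₁ ≥ 0, C₂ ≥ 0 for which there exists a real R̃ with 0 ≤ R̃ ≤ L − sW, R̃ + R₁ ≥ iURB − sU + L, R̃ + R₂ ≥ iVRA − sV + L, R̃ + R₁ + C₁ ≥ iURZ − sU + L,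 R̃ + R₂ + C₂ ≥ iVRZ − sV + L, and 2·R̃ + R₁ + R₂ + C₁ + C₂ ≥ iUVRZ − sUV + 2·L. Define R_F ⊆ ℝ⁴ as the set of quadruples (R₁, R₂, C₁, C₂) with R₁ ≥ 0, R₂ ≥ 0, C₁ ≥ 0, C₂ ≥ 0 satisfying R₁ ≥ iURB + iWV − iUV, R₂ ≥ iVRA + iWU − iUV, R₁ + C₁ ≥ iURZ + iWV − iUV, R₂ + C₂ ≥ iVRZ + iWU − iUV, and R₁ + R₂ + C₁ + C₂ ≥ iUVRZ + iWU + iWV − iUV. Then R̄₃ = R_F. -/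
/-- The final Fourier–Motzkin elimination lemma of the paper: eliminating the auxiliary
rate `R̃` from the rate region `R̄₃` (eq. (rate-regionR3)) yields exactly the rate region
`R_F` of the main theorem (Theorem 1). The hypothesized identities are those satisfied by
the entropic quantities when `W = U + V` is a deterministic function of `(U, V)` over
`F_p`, and `sW ≤ L = log p`. -/
theorem fourier_motzkin_rate_region
    (iURB iVRA iURZ iVRZ iUVRZ iWU iWV iUV sU sV sUV sW L : ℝ)
    (h1 : iUV = sU + sV - sUV)
    (h2 : iWU = sW + sU - sUV)
    (h3 : iWV = sW + sV - sUV)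
    (h4 : sW ≤ L) :
    {r : ℝ × ℝ × ℝ × ℝ |
        0 ≤ r.1 ∧ 0 ≤ r.2.1 ∧ 0 ≤ r.2.2.1 ∧ 0 ≤ r.2.2.2 ∧
        ∃ Rt : ℝ, 0 ≤ Rt ∧ Rt ≤ L - sW ∧
          iURB - sU + L ≤ Rt + r.1 ∧
          iVRA - sV + L ≤ Rt + r.2.1 ∧
          iURZ - sU + L ≤ Rt + r.1 + r.2.2.1 ∧
          iVRZ - sV + L ≤ Rt + r.2.1 + r.2.2.2 ∧
          iUVRZ - sUV + 2 * L ≤ 2 * Rt + r.1 + r.2.1 + r.2.2.1 + r.2.2.2} =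
      {r : ℝ × ℝ × ℝ × ℝ |
        0 ≤ r.1 ∧ 0 ≤ r.2.1 ∧ 0 ≤ r.2.2.1 ∧ 0 ≤ r.2.2.2 ∧
        iURB + iWV - iUV ≤ r.1 ∧
        iVRA + iWU - iUV ≤ r.2.1 ∧
        iURZ + iWV - iUV ≤ r.1 + r.2.2.1 ∧
        iVRZ + iWU - iUV ≤ r.2.1 + r.2.2.2 ∧
        iUVRZ + iWU + iWV - iUV ≤ r.1 + r.2.1 + r.2.2.1 + r.2.2.2} := by
  ext ⟨R1, R2, C1, C2⟩
  simp only [Set.mem_setOf_eq]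
  constructor
  · rintro ⟨a, b, c, d, Rt, h0, hL, e1, e2, e3, e4, e5⟩
    refine ⟨a, b, c, d, by linarith, by linarith, by linarith, by linarith, by linarith⟩
  · rintro ⟨a, b, c, d, e1, e2, e3, e4, e5⟩
    exact ⟨a, b, c, d, L - sW, by linarith, le_refl _, by linarith, by linarith,
      by linarith, by linarith, by linarith⟩
end
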